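/- Let x_n > 0 be the distance from a point noise source to the center of a spherical receiver of radius r_obs > 0, and set r_dif = r_obs − x_n, r_sum = r_obs + x_n, and β = sgn(r_dif). Then the improper integral ∫₀^∞ { (1/2)[erf((r_obs − x_n)/(2√τ)) + erf((r_obs + x_n)/(2√τ))] + (1/x_n)·√(τ/π)·[exp(−r_sum²/(4τ)) − exp(−r_dif²/(4τ))] } dτ converges and equals r_sum³/(6 x_n) − |r_dif|³/(6 x_n) − r_sum²/4 − β·r_dif²/4. -/

import Mathlib

/-!
The integrand `ballOccupancy x_n r_obs τ` is the mass that a Gaussian of variance `2τ` centred at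
distance `x_n` from the origin puts on the ball of radius `r_obs`; it is nonnegative because it
vanishes for a ball of radius `0` and increases with the radius.
It splits as `erfGaussTerm (r_obs - x_n) (-1/x_n) τ + erfGaussTerm (r_obs + x_n) (1/x_n) τ`, and
each `erfGaussTerm a c` has the explicit primitive `erfGaussPrimitive a c`, which tends to
`(a²/4 - c a³/6) sign a` as `τ → 0⁺`. As `τ → ∞` each primitive grows like
`erfGaussPrimitiveGrowth a c`, a combination of `τ^{3/2}` and `τ^{1/2}`, and the two growths
cancel. A nonnegative derivative of a function with limits at both ends is integrable, and its
integral is the difference of the limits.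
-/

open Real MeasureTheory

noncomputable def erf (a : ℝ) : ℝ := (2 / Real.sqrt π) * ∫ b in (0:ℝ)..a, Real.exp (-b^2)

open Set Filter Topology

lemma hasDerivAt_erf (a : ℝ) : HasDerivAt erf (2 / √π * exp (-a ^ 2)) a := by
  have hc : Continuous fun b : ℝ => exp (-b ^ 2) := by fun_prop
  exact (intervalIntegral.integral_hasDerivAt_right (hc.intervalIntegrable 0 a)
    (hc.stronglyMeasurableAtFilter _ _) hc.continuousAt).const_mul _

lemma continuous_erf : Continuous erf :=
  continuous_iff_continuousAt.2 fun a => (hasDerivAt_erf a).continuousAt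

@[simp] lemma erf_zero : erf 0 = 0 := by simp [erf]

lemma erf_neg (a : ℝ) : erf (-a) = -erf a := by
  have h := intervalIntegral.integral_comp_neg (a := 0) (b := a) fun b => exp (-b ^ 2)
  simp only [even_two, Even.neg_pow, neg_zero] at h
  rw [erf, intervalIntegral.integral_symm (-a) 0, ← h, erf]
  ring

lemma monotone_erf : Monotone erf :=
  monotone_of_hasDerivAt_nonneg hasDerivAt_erf fun a => by positivity

lemma tendsto_erf_atTop : Tendsto erf atTop (𝓝 1) := by
  have hint : IntegrableOn (fun b : ℝ => exp (-b ^ 2)) (Ioi 0) := by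
    simpa using (integrable_exp_neg_mul_sq one_pos).integrableOn
  have h := (intervalIntegral_tendsto_integral_Ioi 0 hint tendsto_id).const_mul (2 / √π)
  have hval : (2 / √π) * ∫ b in Ioi (0:ℝ), exp (-b ^ 2) = 1 := by
    have := integral_gaussian_Ioi 1
    simp only [neg_mul, one_mul, div_one] at this
    rw [this]
    field_simp
  rwa [hval] at h

lemma tendsto_erf_atBot : Tendsto erf atBot (𝓝 (-1)) := by
  have h := (tendsto_erf_atTop.comp tendsto_neg_atBot_atTop).neg
  refine h.congr fun a => ?_
  simp [erf_neg]

lemma abs_erf_le_one (a : ℝ) : |erf a| ≤ 1 := by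
  have hle : ∀ b, erf b ≤ 1 := fun b => monotone_erf.ge_of_tendsto tendsto_erf_atTop b
  have := hle (-a)
  rw [erf_neg] at this
  exact abs_le.2 ⟨by linarith, hle a⟩

lemma abs_exp_neg_sub_one_le {y : ℝ} (hy : 0 ≤ y) : |exp (-y) - 1| ≤ y := by
  have h1 : exp (-y) ≤ 1 := exp_le_one_iff.2 (neg_nonpos.2 hy)
  have h2 : -y + 1 ≤ exp (-y) := add_one_le_exp _
  rw [abs_le]; constructor <;> linarith

lemma abs_erf_sub_mul_le (a : ℝ) : |erf a - 2 / √π * a| ≤ 2 / √π * |a| ^ 3 := by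
  have hc : Continuous fun b : ℝ => exp (-b ^ 2) := by fun_prop
  have key : erf a - 2 / √π * a = 2 / √π * ∫ b in (0:ℝ)..a, (exp (-b ^ 2) - 1) := by
    rw [intervalIntegral.integral_sub (hc.intervalIntegrable 0 a) intervalIntegrable_const, erf]
    simp only [intervalIntegral.integral_const, sub_zero, smul_eq_mul, mul_one]
    ring
  have hbound : ∀ b ∈ uIoc 0 a, ‖exp (-b ^ 2) - 1‖ ≤ a ^ 2 := fun b hb => by
    have hb2 : b ^ 2 ≤ a ^ 2 := by
      rcases mem_uIoc.1 hb with h | h <;> nlinarith [h.1, h.2]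
    exact (abs_exp_neg_sub_one_le (sq_nonneg b)).trans hb2
  have := intervalIntegral.norm_integral_le_of_norm_le_const hbound
  rw [key, abs_mul, abs_of_pos (by positivity : (0:ℝ) < 2 / √π)]
  gcongr
  rw [Real.norm_eq_abs, sub_zero] at this
  calc _ ≤ a ^ 2 * |a| := this
    _ = |a| ^ 3 := by rw [← sq_abs]; ring

lemma tendsto_erf_div_nhdsGT_zero (a : ℝ) :
    Tendsto (fun t => erf (a / t)) (𝓝[>] 0) (𝓝 (Real.sign a)) := by
  rcases lt_trichotomy a 0 with ha | rfl | ha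
  · rw [Real.sign_of_neg ha]
    exact tendsto_erf_atBot.comp (tendsto_inv_nhdsGT_zero.const_mul_atTop_of_neg ha)
  · simp
  · rw [Real.sign_of_pos ha]
    exact tendsto_erf_atTop.comp (tendsto_inv_nhdsGT_zero.const_mul_atTop ha)

noncomputable def erfGaussTerm (a c τ : ℝ) : ℝ :=
  1 / 2 * erf (a / (2 * √τ)) + c * √(τ / π) * exp (-a ^ 2 / (4 * τ))

noncomputable def erfGaussPrimitive (a c τ : ℝ) : ℝ :=
  τ / 2 * erf (a / (2 * √τ)) + 2 * c / (3 * √π) * (τ * √τ) * exp (-a ^ 2 / (4 * τ))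
    + (a / (2 * √π) - c * a ^ 2 / (3 * √π)) * √τ * exp (-a ^ 2 / (4 * τ))
    + (a ^ 2 / 4 - c * a ^ 3 / 6) * erf (a / (2 * √τ))

lemma hasDerivAt_erf_div_two_sqrt (a : ℝ) {τ : ℝ} (hτ : 0 < τ) :
    HasDerivAt (fun t => erf (a / (2 * √t)))
      (-(a / (2 * √π * (τ * √τ))) * exp (-a ^ 2 / (4 * τ))) τ := by
  have h := (hasDerivAt_erf _).comp τ
    ((hasDerivAt_const τ a).div ((hasDerivAt_sqrt hτ.ne').const_mul 2) (by positivity))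
  have hexp : -(a / (2 * √τ)) ^ 2 = -a ^ 2 / (4 * τ) := by
    rw [div_pow, mul_pow, sq_sqrt hτ.le]; ring
  refine h.congr_deriv ?_
  simp only [Pi.div_apply, hexp]
  field_simp
  rw [sq_sqrt hτ.le]
  ring

lemma hasDerivAt_exp_neg_sq_div (a : ℝ) {τ : ℝ} (hτ : τ ≠ 0) :
    HasDerivAt (fun t => exp (-a ^ 2 / (4 * t)))
      (a ^ 2 / (4 * τ ^ 2) * exp (-a ^ 2 / (4 * τ))) τ := by
  have h := ((hasDerivAt_inv hτ).const_mul (-a ^ 2 / 4)).exp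
  convert h using 1
  · ext t; congr 1; field_simp
  · field_simp

lemma hasDerivAt_erfGaussPrimitive (a c : ℝ) {τ : ℝ} (hτ : 0 < τ) :
    HasDerivAt (erfGaussPrimitive a c) (erfGaussTerm a c τ) τ := by
  have hE := hasDerivAt_erf_div_two_sqrt a hτ
  have hG := hasDerivAt_exp_neg_sq_div a hτ.ne'
  have hS := hasDerivAt_sqrt hτ.ne'
  have hT := hasDerivAt_id τ
  have h := ((((hT.div_const 2).mul hE).add
    (((hT.mul hS).const_mul (2 * c / (3 * √π))).mul hG)).add
    ((hS.const_mul (a / (2 * √π) - c * a ^ 2 / (3 * √π))).mul hG)).add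
    (hE.const_mul (a ^ 2 / 4 - c * a ^ 3 / 6))
  refine h.congr_deriv ?_
  obtain ⟨s, hs, rfl⟩ : ∃ s, 0 < s ∧ τ = s ^ 2 :=
    ⟨√τ, sqrt_pos.2 hτ, (sq_sqrt hτ.le).symm⟩
  simp only [erfGaussTerm, id, Pi.mul_apply, sqrt_div (sq_nonneg s), sqrt_sq hs.le]
  field_simp
  ring

noncomputable def erfGaussPrimitiveGrowth (a c τ : ℝ) : ℝ :=
  2 * c / (3 * √π) * (τ * √τ) + (a / √π - c * a ^ 2 / (2 * √π)) * √τ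

lemma tendsto_atTop_zero_of_abs_comp_sq_le {f : ℝ → ℝ} (C : ℝ)
    (h : ∀ᶠ s in atTop, |f (s ^ 2)| ≤ C / s) : Tendsto f atTop (𝓝 0) := by
  refine squeeze_zero_norm' ?_
    ((tendsto_const_nhds (x := C)).div_atTop tendsto_sqrt_atTop)
  filter_upwards [tendsto_sqrt_atTop.eventually h, eventually_ge_atTop 0] with τ hτ hτ₀
  rwa [sq_sqrt hτ₀] at hτ

lemma tendsto_mul_erf_div_two_sqrt_sub_atTop (a : ℝ) :
    Tendsto (fun τ => τ / 2 * erf (a / (2 * √τ)) - a / (2 * √π) * √τ) atTop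
      (𝓝 0) := by
  refine tendsto_atTop_zero_of_abs_comp_sq_le (|a| ^ 3 / (8 * √π)) ?_
  filter_upwards [eventually_gt_atTop 0] with s hs
  have key : s ^ 2 / 2 * erf (a / (2 * s)) - a / (2 * √π) * s
      = s ^ 2 / 2 * (erf (a / (2 * s)) - 2 / √π * (a / (2 * s))) := by
    field_simp
  have hu : |a / (2 * s)| ^ 3 = |a| ^ 3 / (8 * s ^ 3) := by
    rw [abs_div, abs_of_pos (by positivity : 0 < 2 * s)]; ring
  rw [sqrt_sq hs.le, key, abs_mul, abs_of_pos (by positivity : 0 < s ^ 2 / 2)]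
  calc _ ≤ s ^ 2 / 2 * (2 / √π * |a / (2 * s)| ^ 3) := by
        gcongr; exact abs_erf_sub_mul_le _
    _ = _ := by rw [hu]; field_simp

lemma tendsto_sqrt_mul_exp_neg_sq_div_sub_one_atTop (a : ℝ) :
    Tendsto (fun τ => √τ * (exp (-a ^ 2 / (4 * τ)) - 1)) atTop (𝓝 0) := by
  refine tendsto_atTop_zero_of_abs_comp_sq_le (a ^ 2 / 4) ?_
  filter_upwards [eventually_gt_atTop 0] with s hs
  rw [sqrt_sq hs.le, abs_mul, abs_of_pos hs, neg_div]
  calc _ ≤ s * (a ^ 2 / (4 * s ^ 2)) := by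
        gcongr; exact abs_exp_neg_sub_one_le (by positivity)
    _ = _ := by field_simp

lemma tendsto_mul_sqrt_mul_exp_neg_sq_div_sub_atTop (a : ℝ) :
    Tendsto (fun τ => τ * √τ * (exp (-a ^ 2 / (4 * τ)) - 1) + a ^ 2 / 4 * √τ) atTop
      (𝓝 0) := by
  refine tendsto_atTop_zero_of_abs_comp_sq_le (a ^ 4 / 16) ?_
  filter_upwards [eventually_gt_atTop |a|] with s hs
  have hs₀ : 0 < s := (abs_nonneg a).trans_lt hs
  have hy : |-(a ^ 2 / (4 * s ^ 2))| ≤ 1 := by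
    rw [abs_neg, abs_of_nonneg (by positivity), div_le_one (by positivity), ← sq_abs]
    nlinarith [mul_self_lt_mul_self (abs_nonneg a) hs]
  have key : s ^ 2 * s * (exp (-a ^ 2 / (4 * s ^ 2)) - 1) + a ^ 2 / 4 * s
      = s ^ 3 * (exp (-(a ^ 2 / (4 * s ^ 2))) - 1 - -(a ^ 2 / (4 * s ^ 2))) := by
    rw [neg_div]; field_simp; ring
  rw [sqrt_sq hs₀.le, key, abs_mul, abs_of_pos (by positivity : 0 < s ^ 3)]
  calc _ ≤ s ^ 3 * (-(a ^ 2 / (4 * s ^ 2))) ^ 2 := by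
        gcongr; exact abs_exp_sub_one_sub_id_le hy
    _ = _ := by field_simp; ring

lemma tendsto_erf_div_two_sqrt_atTop (a : ℝ) :
    Tendsto (fun τ => erf (a / (2 * √τ))) atTop (𝓝 0) := by
  simpa [Function.comp_def] using (continuous_erf.tendsto 0).comp
    (tendsto_const_nhds.div_atTop (tendsto_sqrt_atTop.const_mul_atTop two_pos))

lemma tendsto_erfGaussPrimitive_sub_growth_atTop (a c : ℝ) :
    Tendsto (fun τ => erfGaussPrimitive a c τ - erfGaussPrimitiveGrowth a c τ) atTop
      (𝓝 0) := by
  have h := (((tendsto_mul_erf_div_two_sqrt_sub_atTop a).add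
    ((tendsto_mul_sqrt_mul_exp_neg_sq_div_sub_atTop a).const_mul (2 * c / (3 * √π)))).add
    ((tendsto_sqrt_mul_exp_neg_sq_div_sub_one_atTop a).const_mul
      (a / (2 * √π) - c * a ^ 2 / (3 * √π)))).add
    ((tendsto_erf_div_two_sqrt_atTop a).const_mul (a ^ 2 / 4 - c * a ^ 3 / 6))
  simp only [mul_zero, add_zero] at h
  refine h.congr fun τ => ?_
  simp only [erfGaussPrimitive, erfGaussPrimitiveGrowth]
  ring

lemma tendsto_erfGaussPrimitive_nhdsGT_zero (a c : ℝ) :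
    Tendsto (erfGaussPrimitive a c) (𝓝[>] 0)
      (𝓝 ((a ^ 2 / 4 - c * a ^ 3 / 6) * Real.sign a)) := by
  have hzero {f : ℝ → ℝ} (hf : Continuous f) (hf₀ : f 0 = 0) :
      Tendsto f (𝓝[>] 0) (𝓝 0) :=
    (hf.tendsto' 0 0 hf₀).mono_left nhdsWithin_le_nhds
  have h2s : Tendsto (fun τ => 2 * √τ) (𝓝[>] 0) (𝓝[>] 0) := by
    refine tendsto_nhdsWithin_iff.2 ⟨hzero (by fun_prop) (by simp), ?_⟩
    filter_upwards [self_mem_nhdsWithin] with τ (hτ : 0 < τ)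
    exact mul_pos two_pos (sqrt_pos.2 hτ)
  have herf : IsBoundedUnder (· ≤ ·) (𝓝[>] 0) fun τ => ‖erf (a / (2 * √τ))‖ :=
    isBoundedUnder_of ⟨1, fun τ => abs_erf_le_one _⟩
  have hexp : IsBoundedUnder (· ≤ ·) (𝓝[>] (0 : ℝ))
      fun τ => ‖exp (-a ^ 2 / (4 * τ))‖ := by
    refine isBoundedUnder_of_eventually_le (a := 1) ?_
    filter_upwards [self_mem_nhdsWithin] with τ (hτ : 0 < τ)
    rw [norm_of_nonneg (exp_nonneg _), exp_le_one_iff]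
    exact div_nonpos_of_nonpos_of_nonneg (neg_nonpos.2 (sq_nonneg a)) (by positivity)
  have hτ : Tendsto (fun τ : ℝ => τ / 2) (𝓝[>] 0) (𝓝 0) := hzero (by fun_prop) (by simp)
  have hτs : Tendsto (fun τ => τ * √τ) (𝓝[>] 0) (𝓝 0) := hzero (by fun_prop) (by simp)
  have hs : Tendsto (fun τ => √τ) (𝓝[>] 0) (𝓝 0) := hzero continuous_sqrt sqrt_zero
  have h := (((hτ.zero_mul_isBoundedUnder_le herf).add
    ((hτs.zero_mul_isBoundedUnder_le hexp).const_mul (2 * c / (3 * √π)))).add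
    ((hs.zero_mul_isBoundedUnder_le hexp).const_mul
      (a / (2 * √π) - c * a ^ 2 / (3 * √π)))).add
    (((tendsto_erf_div_nhdsGT_zero a).comp h2s).const_mul (a ^ 2 / 4 - c * a ^ 3 / 6))
  simp only [mul_zero, zero_add] at h
  refine h.congr fun τ => ?_
  simp only [erfGaussPrimitive, Function.comp]
  ring

lemma erfGaussPrimitiveGrowth_sub_add_add_eq_zero (r : ℝ) {x : ℝ} (hx : x ≠ 0) (τ : ℝ) :
    erfGaussPrimitiveGrowth (r - x) (-(1 / x)) τ + erfGaussPrimitiveGrowth (r + x) (1 / x) τ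
      = 0 := by
  simp only [erfGaussPrimitiveGrowth]
  field_simp
  ring

noncomputable def ballOccupancy (x ρ τ : ℝ) : ℝ :=
  1 / 2 * (erf ((ρ - x) / (2 * √τ)) + erf ((ρ + x) / (2 * √τ)))
    + 1 / x * √(τ / π) * (exp (-(ρ + x) ^ 2 / (4 * τ)) - exp (-(ρ - x) ^ 2 / (4 * τ)))

lemma ballOccupancy_eq_erfGaussTerm_add (x ρ τ : ℝ) :
    ballOccupancy x ρ τ
      = erfGaussTerm (ρ - x) (-(1 / x)) τ + erfGaussTerm (ρ + x) (1 / x) τ := by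
  simp only [ballOccupancy, erfGaussTerm]
  ring

lemma ballOccupancy_zero_radius (x τ : ℝ) : ballOccupancy x 0 τ = 0 := by
  simp only [ballOccupancy, zero_sub, zero_add, neg_div, erf_neg, even_two, Even.neg_pow]
  ring

lemma hasDerivAt_erf_add_div (c : ℝ) {τ : ℝ} (hτ : 0 < τ) (ρ : ℝ) :
    HasDerivAt (fun ρ => erf ((ρ + c) / (2 * √τ)))
      (exp (-(ρ + c) ^ 2 / (4 * τ)) / (√π * √τ)) ρ := by
  have h := (hasDerivAt_erf _).comp ρ (((hasDerivAt_id ρ).add_const c).div_const (2 * √τ))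
  refine h.congr_deriv ?_
  rw [id, div_pow, mul_pow, sq_sqrt hτ.le]
  field_simp
  ring_nf

lemma hasDerivAt_exp_neg_add_sq_div (c τ ρ : ℝ) :
    HasDerivAt (fun ρ => exp (-(ρ + c) ^ 2 / (4 * τ)))
      (-((ρ + c) / (2 * τ)) * exp (-(ρ + c) ^ 2 / (4 * τ))) ρ := by
  have h := ((((hasDerivAt_id ρ).add_const c).pow 2).neg.div_const (4 * τ)).exp
  refine h.congr_deriv ?_
  simp only [id, Pi.neg_apply, Pi.pow_apply]
  ring

lemma hasDerivAt_ballOccupancy {x : ℝ} (hx : x ≠ 0) {τ : ℝ} (hτ : 0 < τ) (ρ : ℝ) :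
    HasDerivAt (fun ρ => ballOccupancy x ρ τ)
      (ρ / (2 * x * √π * √τ)
        * (exp (-(ρ - x) ^ 2 / (4 * τ)) - exp (-(ρ + x) ^ 2 / (4 * τ)))) ρ := by
  have h := (((hasDerivAt_erf_add_div (-x) hτ ρ).add (hasDerivAt_erf_add_div x hτ ρ)).const_mul
    (1 / 2 : ℝ)).add (((hasDerivAt_exp_neg_add_sq_div x τ ρ).sub
      (hasDerivAt_exp_neg_add_sq_div (-x) τ ρ)).const_mul (1 / x * √(τ / π)))
  simp only [← sub_eq_add_neg] at h
  refine h.congr_deriv ?_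
  obtain ⟨s, hs, rfl⟩ : ∃ s, 0 < s ∧ τ = s ^ 2 :=
    ⟨√τ, sqrt_pos.2 hτ, (sq_sqrt hτ.le).symm⟩
  rw [sqrt_div (sq_nonneg s), sqrt_sq hs.le]
  field_simp
  ring

lemma ballOccupancy_nonneg {x ρ τ : ℝ} (hx : 0 < x) (hρ : 0 ≤ ρ) (hτ : 0 < τ) :
    0 ≤ ballOccupancy x ρ τ := by
  have hderiv := hasDerivAt_ballOccupancy hx.ne' hτ
  have hmono : MonotoneOn (fun ρ => ballOccupancy x ρ τ) (Ici 0) := by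
    refine monotoneOn_of_hasDerivWithinAt_nonneg (convex_Ici 0)
      (fun ρ _ => (hderiv ρ).continuousAt.continuousWithinAt)
      (fun ρ _ => (hderiv ρ).hasDerivWithinAt) fun ρ hρ => ?_
    rw [interior_Ici] at hρ
    have hρ : 0 < ρ := hρ
    refine mul_nonneg (by positivity) (sub_nonneg.2 (exp_le_exp.2 ?_))
    exact div_le_div_of_nonneg_right (by nlinarith) (by positivity)
  simpa [ballOccupancy_zero_radius] using hmono self_mem_Ici hρ hρ

lemma integral_Ioi_of_hasDerivAt_of_nonneg_of_tendsto_nhdsGT {g g' : ℝ → ℝ} {a l₀ l : ℝ}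
    (h₀ : Tendsto g (𝓝[>] a) (𝓝 l₀)) (hderiv : ∀ x ∈ Ioi a, HasDerivAt g (g' x) x)
    (hpos : ∀ x ∈ Ioi a, 0 ≤ g' x) (hg : Tendsto g atTop (𝓝 l)) :
    IntegrableOn g' (Ioi a) ∧ ∫ x in Ioi a, g' x = l - l₀ := by
  classical
  have hcont : ContinuousWithinAt (Function.update g a l₀) (Ici a) a := by
    rwa [← continuousWithinAt_Ioi_iff_Ici, continuousWithinAt_update_same,
      sdiff_singleton_eq_self (s := Ioi a) (lt_irrefl a)]
  have hderiv' : ∀ x ∈ Ioi a, HasDerivAt (Function.update g a l₀) (g' x) x := fun x hx =>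
    (hderiv x hx).congr_of_eventuallyEq <| by
      filter_upwards [isOpen_Ioi.mem_nhds hx] with y hy
      exact Function.update_of_ne (ne_of_gt hy) _ _
  have hg' : Tendsto (Function.update g a l₀) atTop (𝓝 l) := hg.congr' <| by
    filter_upwards [eventually_gt_atTop a] with y hy
    exact (Function.update_of_ne (ne_of_gt hy) _ _).symm
  refine ⟨integrableOn_Ioi_deriv_of_nonneg hcont hderiv' hpos hg', ?_⟩
  rw [integral_Ioi_of_hasDerivAt_of_nonneg hcont hderiv' hpos hg', Function.update_self]

lemma sign_mul_pow_of_odd {n : ℕ} (hn : Odd n) (y : ℝ) : Real.sign y * y ^ n = |y| ^ n := by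
  rcases lt_trichotomy y 0 with h | rfl | h
  · rw [Real.sign_of_neg h, abs_of_neg h, hn.neg_pow]; ring
  · simp [hn.pos.ne']
  · rw [Real.sign_of_pos h, abs_of_pos h, one_mul]

/-- The asymptotic impact of a continuously-emitting noise source in the absence of flow and
molecule degradation: the improper integral converges and equals
`r_sum³/(6 x_n) − |r_dif|³/(6 x_n) − r_sum²/4 − β r_dif²/4`. -/
theorem asymptotic_impact_no_flow_no_degradation (x_n r_obs r_dif r_sum β : ℝ)
    (hx : 0 < x_n) (hr : 0 < r_obs)
    (hdif : r_dif = r_obs - x_n) (hsum : r_sum = r_obs + x_n)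
    (hβ : β = Real.sign r_dif) :
    MeasureTheory.IntegrableOn
      (fun τ =>
        (1/2) * (erf ((r_obs - x_n) / (2 * Real.sqrt τ))
                  + erf ((r_obs + x_n) / (2 * Real.sqrt τ)))
        + (1/x_n) * Real.sqrt (τ/π)
            * (Real.exp (-(r_sum^2) / (4*τ)) - Real.exp (-(r_dif^2) / (4*τ))))
      (Set.Ioi (0:ℝ)) ∧
    ∫ τ in Set.Ioi (0:ℝ),
      ((1/2) * (erf ((r_obs - x_n) / (2 * Real.sqrt τ))
                 + erf ((r_obs + x_n) / (2 * Real.sqrt τ)))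
        + (1/x_n) * Real.sqrt (τ/π)
            * (Real.exp (-(r_sum^2) / (4*τ)) - Real.exp (-(r_dif^2) / (4*τ))))
    = r_sum^3/(6*x_n) - |r_dif|^3/(6*x_n) - r_sum^2/4 - β * r_dif^2/4 := by
  subst hdif hsum hβ
  set F := fun τ => erfGaussPrimitive (r_obs - x_n) (-(1 / x_n)) τ
    + erfGaussPrimitive (r_obs + x_n) (1 / x_n) τ
  have hderiv : ∀ τ ∈ Ioi (0 : ℝ), HasDerivAt F (ballOccupancy x_n r_obs τ) τ :=
    fun τ hτ => by
      rw [ballOccupancy_eq_erfGaussTerm_add]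
      exact (hasDerivAt_erfGaussPrimitive _ _ hτ).add (hasDerivAt_erfGaussPrimitive _ _ hτ)
  have htop : Tendsto F atTop (𝓝 0) := by
    have h := (tendsto_erfGaussPrimitive_sub_growth_atTop (r_obs - x_n) (-(1 / x_n))).add
      (tendsto_erfGaussPrimitive_sub_growth_atTop (r_obs + x_n) (1 / x_n))
    rw [add_zero] at h
    refine h.congr fun τ => ?_
    have := erfGaussPrimitiveGrowth_sub_add_add_eq_zero r_obs hx.ne' τ
    simp only [F]
    linarith
  obtain ⟨hint, hval⟩ := integral_Ioi_of_hasDerivAt_of_nonneg_of_tendsto_nhdsGT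
    ((tendsto_erfGaussPrimitive_nhdsGT_zero _ _).add
      (tendsto_erfGaussPrimitive_nhdsGT_zero _ _))
    hderiv (fun τ hτ => ballOccupancy_nonneg hx hr.le hτ) htop
  refine ⟨hint, hval.trans ?_⟩
  rw [Real.sign_of_pos (by linarith : 0 < r_obs + x_n),
    ← sign_mul_pow_of_odd (by decide : Odd 3)]
  field_simp
  ring
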